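/- arXiv:math/0507172 — 2 statements merged into one kernel-verified Lean document; each statement's English description precedes it below -/
import Mathlib

section
/- For every z ∈ ℂ+, Υ(z)Υ(z)* ≤ I_N/(Im z)² and Υ̃(z)Υ̃(z)* ≤ I_n/(Im z)² in the sense of Hermitian positive semidefinite ordering; in particular the spectral norms of Υ(z) and Υ̃(z) are at most 1/Im z. -/
/-!
For `z ∈ ℂ⁺` write `Υ(z) = B⁻¹` with `B = Γ⁻¹ - A (z Γ̃) Aᵀ`. A Stieltjes transform `γ` of a
probability measure on `ℝ₊` satisfies `Im (1 / γ z) ≤ -Im z`, because by Cauchy–Schwarz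
`|γ z|² ≤ ∫ |t - z|⁻² = Im (γ z) / Im z`, and `Im (z γ z) ≥ 0`, because
`Im (z / (t - z)) = t Im z / |t - z|²` with `t ≥ 0`. Hence `-Im ⟪x, B x⟫ ≥ Im z ‖x‖²`, so `B` is
invertible with `‖B⁻¹‖ ≤ 1 / Im z`, and the C⋆-identity `‖Υ Υ*‖ = ‖Υ‖²` turns this into
`Υ Υ* ≤ I / (Im z)²`. `Υ̃` is `Υ` for `Aᵀ` with the roles of `γ` and `γ̃` exchanged.
-/

open MeasureTheory Matrix Complex Filter
open scoped Topology ComplexOrder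

noncomputable section

/-- The set `ℂ ∖ ℝ₊`. -/
def offRplus : Set ℂ := {z : ℂ | ¬ (z.im = 0 ∧ 0 ≤ z.re)}

/-- `f` is the Stieltjes transform of a probability measure carried by `ℝ₊`. -/
def IsStieltjesPM (f : ℂ → ℂ) : Prop :=
  ∃ μ : Measure ℝ, IsProbabilityMeasure μ ∧ μ (Set.Iio 0) = 0 ∧
    ∀ z ∈ offRplus, f z = ∫ t, ((t : ℂ) - z)⁻¹ ∂μ
def Tmat {N n : ℕ} (A : Matrix (Fin N) (Fin n) ℝ)
    (ψ : Fin N → ℂ → ℂ) (ψt : Fin n → ℂ → ℂ) (z : ℂ) : Matrix (Fin N) (Fin N) ℂ :=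
  ((Matrix.diagonal fun i => ψ i z)⁻¹
    - z • (A.map Complex.ofReal * Matrix.diagonal (fun j => ψt j z) * (A.map Complex.ofReal)ᵀ))⁻¹

def Ttmat {N n : ℕ} (A : Matrix (Fin N) (Fin n) ℝ)
    (ψ : Fin N → ℂ → ℂ) (ψt : Fin n → ℂ → ℂ) (z : ℂ) : Matrix (Fin n) (Fin n) ℂ :=
  ((Matrix.diagonal fun j => ψt j z)⁻¹
    - z • ((A.map Complex.ofReal)ᵀ * Matrix.diagonal (fun i => ψ i z) * A.map Complex.ofReal))⁻¹

def SolvesSystem {N n : ℕ} (σ : Fin N → Fin n → ℝ) (A : Matrix (Fin N) (Fin n) ℝ)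
    (ψ : Fin N → ℂ → ℂ) (ψt : Fin n → ℂ → ℂ) : Prop :=
  (∀ i, IsStieltjesPM (ψ i)) ∧ (∀ j, IsStieltjesPM (ψt j)) ∧
  ∀ z ∈ offRplus,
    (∀ i, ψ i z
      = -(z * (1 + (n : ℂ)⁻¹
          * ((Matrix.diagonal fun j => ((σ i j : ℂ))^2) * Ttmat A ψ ψt z).trace))⁻¹) ∧
    (∀ j, ψt j z
      = -(z * (1 + (n : ℂ)⁻¹
          * ((Matrix.diagonal fun i => ((σ i j : ℂ))^2) * Tmat A ψ ψt z).trace))⁻¹)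

lemma sq_integral_le_integral_sq {Ω : Type*} [MeasurableSpace Ω] {μ : Measure Ω}
    [IsProbabilityMeasure μ] {f : Ω → ℝ} (hf : MemLp f 2 μ) :
    (∫ ω, f ω ∂μ) ^ 2 ≤ ∫ ω, f ω ^ 2 ∂μ := by
  have := ProbabilityTheory.variance_nonneg f μ
  rw [ProbabilityTheory.variance_eq_sub hf] at this
  simpa using this

section StieltjesTransform

variable {μ : Measure ℝ} {z : ℂ}

lemma im_inv_ofReal_sub (t : ℝ) : ((t : ℂ) - z)⁻¹.im = z.im * ‖((t : ℂ) - z)⁻¹‖ ^ 2 := by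
  rw [inv_im, norm_inv, inv_pow, Complex.sq_norm]
  simp [div_eq_mul_inv]

lemma ofReal_sub_ne_zero (hz : z.im ≠ 0) (t : ℝ) : (t : ℂ) - z ≠ 0 :=
  fun h => hz (by simpa using congrArg im h)

lemma im_mul_inv_ofReal_sub (hz : z.im ≠ 0) (t : ℝ) :
    (z * ((t : ℂ) - z)⁻¹).im = t * (z.im * ‖((t : ℂ) - z)⁻¹‖ ^ 2) := by
  have hne := ofReal_sub_ne_zero hz t
  have : z * ((t : ℂ) - z)⁻¹ = t * ((t : ℂ) - z)⁻¹ - 1 := by field_simp; ring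
  rw [this, sub_im, im_ofReal_mul, im_inv_ofReal_sub]
  simp

lemma norm_inv_ofReal_sub_le (hz : z.im ≠ 0) (t : ℝ) : ‖((t : ℂ) - z)⁻¹‖ ≤ |z.im|⁻¹ := by
  rw [norm_inv]
  refine inv_anti₀ (abs_pos.mpr hz) ?_
  simpa using abs_im_le_norm ((t : ℂ) - z)

lemma measurable_inv_ofReal_sub : Measurable fun t : ℝ => ((t : ℂ) - z)⁻¹ := by fun_prop

lemma integrable_inv_ofReal_sub [IsFiniteMeasure μ] (hz : z.im ≠ 0) :
    Integrable (fun t : ℝ => ((t : ℂ) - z)⁻¹) μ :=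
  Integrable.of_bound measurable_inv_ofReal_sub.aestronglyMeasurable _
    (ae_of_all μ (norm_inv_ofReal_sub_le hz))

lemma memLp_norm_inv_ofReal_sub [IsFiniteMeasure μ] (hz : z.im ≠ 0) :
    MemLp (fun t : ℝ => ‖((t : ℂ) - z)⁻¹‖) 2 μ :=
  MemLp.of_bound measurable_inv_ofReal_sub.norm.aestronglyMeasurable _
    (ae_of_all μ fun t => by simpa using norm_inv_ofReal_sub_le hz t)

lemma im_integral_inv_ofReal_sub [IsFiniteMeasure μ] (hz : z.im ≠ 0) :
    (∫ t, ((t : ℂ) - z)⁻¹ ∂μ).im = z.im * ∫ t, ‖((t : ℂ) - z)⁻¹‖ ^ 2 ∂μ := by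
  have h := integral_im (𝕜 := ℂ) (integrable_inv_ofReal_sub (μ := μ) hz)
  simp only [RCLike.im_to_complex, im_inv_ofReal_sub] at h
  rw [← h, integral_const_mul]

lemma integral_norm_inv_ofReal_sub_sq_pos [IsProbabilityMeasure μ] (hz : z.im ≠ 0) :
    0 < ∫ t, ‖((t : ℂ) - z)⁻¹‖ ^ 2 ∂μ := by
  have hpos (t : ℝ) : 0 < ‖((t : ℂ) - z)⁻¹‖ ^ 2 := by
    have := inv_ne_zero (ofReal_sub_ne_zero hz t)
    positivity
  have hsupp : Function.support (fun t : ℝ => ‖((t : ℂ) - z)⁻¹‖ ^ 2) = Set.univ :=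
    Set.eq_univ_of_forall fun t => (hpos t).ne'
  rw [integral_pos_iff_support_of_nonneg (fun t => (hpos t).le)
    (memLp_norm_inv_ofReal_sub hz).integrable_sq, hsupp]
  simp

lemma im_inv_integral_inv_ofReal_sub_le [IsProbabilityMeasure μ] (hz : 0 < z.im) :
    (∫ t, ((t : ℂ) - z)⁻¹ ∂μ)⁻¹.im ≤ -z.im := by
  set f := ∫ t, ((t : ℂ) - z)⁻¹ ∂μ
  set I := ∫ t, ‖((t : ℂ) - z)⁻¹‖ ^ 2 ∂μ
  have hIpos : 0 < I := integral_norm_inv_ofReal_sub_sq_pos hz.ne'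
  have hnorm : ‖f‖ ^ 2 ≤ I := calc
    ‖f‖ ^ 2 ≤ (∫ t, ‖((t : ℂ) - z)⁻¹‖ ∂μ) ^ 2 := by gcongr; exact norm_integral_le_integral_norm _
    _ ≤ I := sq_integral_le_integral_sq (memLp_norm_inv_ofReal_sub hz.ne')
  have hf : 0 < ‖f‖ ^ 2 := by
    have him : f.im = z.im * I := im_integral_inv_ofReal_sub hz.ne'
    have : f ≠ 0 := fun h => by
      rw [h, zero_im] at him
      exact (mul_pos hz hIpos).ne him
    positivity
  rw [inv_im, im_integral_inv_ofReal_sub hz.ne', ← Complex.sq_norm, neg_div, neg_le_neg_iff,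
    le_div_iff₀ hf]
  exact mul_le_mul_of_nonneg_left hnorm hz.le

lemma im_mul_integral_inv_ofReal_sub_nonneg [IsFiniteMeasure μ] (hμ : ∀ᵐ t ∂μ, 0 ≤ t)
    (hz : 0 < z.im) : 0 ≤ (z * ∫ t, ((t : ℂ) - z)⁻¹ ∂μ).im := by
  have h := integral_im (𝕜 := ℂ) ((integrable_inv_ofReal_sub (μ := μ) hz.ne').const_mul z)
  simp only [RCLike.im_to_complex, im_mul_inv_ofReal_sub hz.ne'] at h
  rw [← integral_const_mul, ← h]
  refine integral_nonneg_of_ae ?_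
  filter_upwards [hμ] with t ht
  positivity

end StieltjesTransform

namespace IsStieltjesPM

variable {f : ℂ → ℂ} {z : ℂ}

lemma im_inv_le (hf : IsStieltjesPM f) (hz : 0 < z.im) : (f z)⁻¹.im ≤ -z.im := by
  obtain ⟨μ, _, -, hrep⟩ := hf
  rw [hrep z fun h => hz.ne' h.1]
  exact im_inv_integral_inv_ofReal_sub_le hz

lemma im_mul_nonneg (hf : IsStieltjesPM f) (hz : 0 < z.im) : 0 ≤ (z * f z).im := by
  obtain ⟨μ, _, hμ, hrep⟩ := hf
  rw [hrep z fun h => hz.ne' h.1]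
  exact im_mul_integral_inv_ofReal_sub_nonneg (ae_iff.mpr (by simp only [not_le]; exact hμ)) hz

end IsStieltjesPM

section CoerciveMatrix

open scoped Matrix.Norms.L2Operator MatrixOrder

variable {m k : Type*} [Fintype m] [Fintype k]

lemma star_dotProduct_diagonal_mulVec [DecidableEq m] {𝕜 : Type*} [RCLike 𝕜] (d x : m → 𝕜) :
    star x ⬝ᵥ (diagonal d *ᵥ x) = ∑ i, d i * ((‖x i‖ ^ 2 : ℝ) : 𝕜) := by
  simp only [dotProduct, mulVec_diagonal, Pi.star_apply, RCLike.star_def, RCLike.ofReal_pow,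
    ← RCLike.conj_mul]
  exact Finset.sum_congr rfl fun i _ => by ring

lemma star_dotProduct_mul_mul_conjTranspose_mulVec {R : Type*} [CommSemiring R] [StarRing R]
    (M : Matrix m k R) (G : Matrix k k R) (x : m → R) :
    star x ⬝ᵥ ((M * G * Mᴴ) *ᵥ x) = star (Mᴴ *ᵥ x) ⬝ᵥ (G *ᵥ (Mᴴ *ᵥ x)) := by
  rw [← mulVec_mulVec, ← mulVec_mulVec, dotProduct_mulVec, star_mulVec,
    conjTranspose_conjTranspose]

lemma le_neg_im_star_dotProduct_diagonal_sub_mulVec [DecidableEq m] [DecidableEq k]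
    (M : Matrix m k ℂ) {d : m → ℂ} {g : k → ℂ} {c : ℝ} (hd : ∀ i, (d i).im ≤ -c)
    (hg : ∀ j, 0 ≤ (g j).im) (x : m → ℂ) :
    c * ∑ i, ‖x i‖ ^ 2 ≤ -(star x ⬝ᵥ ((diagonal d - M * diagonal g * Mᴴ) *ᵥ x)).im := by
  rw [sub_mulVec, dotProduct_sub, star_dotProduct_mul_mul_conjTranspose_mulVec,
    star_dotProduct_diagonal_mulVec, star_dotProduct_diagonal_mulVec]
  simp only [RCLike.ofReal_eq_complex_ofReal, sub_im, im_sum, im_mul_ofReal, neg_sub,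
    Finset.mul_sum]
  have hM : 0 ≤ ∑ j, (g j).im * ‖(Mᴴ *ᵥ x) j‖ ^ 2 :=
    Finset.sum_nonneg fun j _ => mul_nonneg (hg j) (by positivity)
  have hD : ∑ i, (d i).im * ‖x i‖ ^ 2 ≤ ∑ i, -c * ‖x i‖ ^ 2 :=
    Finset.sum_le_sum fun i _ => mul_le_mul_of_nonneg_right (hd i) (by positivity)
  simp only [neg_mul, Finset.sum_neg_distrib] at hD
  linarith

lemma l2_opNorm_inv_le_of_le_norm_star_dotProduct_mulVec [DecidableEq m] {B : Matrix m m ℂ}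
    {c : ℝ} (hc : 0 < c) (h : ∀ x : m → ℂ, c * ∑ i, ‖x i‖ ^ 2 ≤ ‖star x ⬝ᵥ (B *ᵥ x)‖) :
    ‖B⁻¹‖ ≤ c⁻¹ := by
  lift c to NNReal using hc.le
  replace hc : 0 < c := by exact_mod_cast hc
  set L := toEuclideanCLM (𝕜 := ℂ) B
  have hL (x : EuclideanSpace ℂ m) : ‖x‖ ^ 2 * c ≤ ‖inner ℂ (L x) x‖ := by
    rw [EuclideanSpace.inner_eq_star_dotProduct, ofLp_toEuclideanCLM, dotProduct_star,
      norm_star, dotProduct_comm, EuclideanSpace.norm_sq_eq, mul_comm]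
    exact h _
  have hB : IsUnit B :=
    (isUnit_map_iff (toEuclideanCLM (𝕜 := ℂ)) B).mp
      (ContinuousLinearMap.isUnit_of_forall_le_norm_inner_map L hc hL)
  have hanti := ContinuousLinearMap.antilipschitz_of_forall_le_inner_map L hc hL
  rw [cstar_norm_def]
  refine ContinuousLinearMap.opNorm_le_bound _ (by positivity) fun u => ?_
  have hu : L (toEuclideanCLM (𝕜 := ℂ) B⁻¹ u) = u := by
    change (L * toEuclideanCLM (𝕜 := ℂ) B⁻¹) u = u
    rw [← map_mul, mul_nonsing_inv B ((isUnit_iff_isUnit_det B).mp hB), map_one]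
    rfl
  simpa [hu] using hanti.le_mul_dist (toEuclideanCLM (𝕜 := ℂ) B⁻¹ u) 0

lemma posSemidef_sq_smul_one_sub_mul_conjTranspose [DecidableEq m]
    {T : Matrix m m ℂ} {r : ℝ} (h : ‖T‖ ≤ r) : (((r : ℂ) ^ 2) • 1 - T * Tᴴ).PosSemidef := by
  have hT : (algebraMap ℝ (Matrix m m ℂ) (‖T‖ ^ 2) - T * Tᴴ).PosSemidef :=
    Matrix.le_iff.mp CStarAlgebra.mul_star_le_algebraMap_norm_sq
  have hgap : (((r ^ 2 - ‖T‖ ^ 2 : ℝ) : ℂ) • (1 : Matrix m m ℂ)).PosSemidef :=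
    PosSemidef.one.smul (by exact_mod_cast sub_nonneg.mpr (pow_le_pow_left₀ (norm_nonneg T) h 2))
  convert hgap.add hT using 1
  rw [Algebra.algebraMap_eq_smul_one]
  push_cast
  module

end CoerciveMatrix

section Resolvent

open scoped Matrix.Norms.L2Operator

variable {N n : ℕ} (A : Matrix (Fin N) (Fin n) ℝ) (γ : Fin N → ℂ → ℂ) (γt : Fin n → ℂ → ℂ)

lemma conjTranspose_map_ofReal {m k : Type*} (M : Matrix m k ℝ) :
    (M.map ofReal)ᴴ = (M.map ofReal)ᵀ := by
  ext; simp

lemma Tmat_eq_inv_diagonal_sub {z : ℂ} (hγ : ∀ i, γ i z ≠ 0) :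
    Tmat A γ γt z = (diagonal (fun i => (γ i z)⁻¹)
      - A.map ofReal * diagonal (fun j => z * γt j z) * (A.map ofReal)ᴴ)⁻¹ := by
  have hinv : (diagonal fun i => γ i z)⁻¹ = diagonal fun i => (γ i z)⁻¹ :=
    inv_eq_left_inv (by simp [diagonal_mul_diagonal, hγ])
  have hdiag : diagonal (fun j => z * γt j z) = z • diagonal fun j => γt j z := by
    rw [← diagonal_smul]; rfl
  rw [Tmat, hinv, conjTranspose_map_ofReal, hdiag, Matrix.mul_smul, Matrix.smul_mul]

lemma Ttmat_eq_Tmat_transpose (z : ℂ) : Ttmat A γ γt z = Tmat Aᵀ γt γ z := by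
  rw [Ttmat, Tmat, transpose_map, transpose_transpose]

variable {A γ γt}

lemma l2_opNorm_Tmat_le (hγ : ∀ i, IsStieltjesPM (γ i)) (hγt : ∀ j, IsStieltjesPM (γt j))
    {z : ℂ} (hz : 0 < z.im) : ‖Tmat A γ γt z‖ ≤ z.im⁻¹ := by
  have hd (i : Fin N) : ((γ i z)⁻¹).im ≤ -z.im := (hγ i).im_inv_le hz
  have hg (j : Fin n) : 0 ≤ (z * γt j z).im := (hγt j).im_mul_nonneg hz
  have hne (i : Fin N) : γ i z ≠ 0 := fun h => by
    have := hd i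
    rw [h, _root_.inv_zero, zero_im] at this
    linarith
  rw [Tmat_eq_inv_diagonal_sub A γ γt hne]
  exact l2_opNorm_inv_le_of_le_norm_star_dotProduct_mulVec hz fun x =>
    (le_neg_im_star_dotProduct_diagonal_sub_mulVec _ hd hg x).trans
      ((neg_le_abs _).trans (abs_im_le_norm _))

lemma posSemidef_inv_sq_im_smul_one_sub_Tmat_mul_conjTranspose (hγ : ∀ i, IsStieltjesPM (γ i))
    (hγt : ∀ j, IsStieltjesPM (γt j)) {z : ℂ} (hz : 0 < z.im) :
    (((z.im : ℂ) ^ 2)⁻¹ • (1 : Matrix (Fin N) (Fin N) ℂ)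
      - Tmat A γ γt z * (Tmat A γ γt z)ᴴ).PosSemidef := by
  have := posSemidef_sq_smul_one_sub_mul_conjTranspose (l2_opNorm_Tmat_le (A := A) hγ hγt hz)
  rwa [ofReal_inv, inv_pow] at this

lemma norm_toEuclideanLin_Tmat_le (hγ : ∀ i, IsStieltjesPM (γ i))
    (hγt : ∀ j, IsStieltjesPM (γt j)) {z : ℂ} (hz : 0 < z.im) (x : EuclideanSpace ℂ (Fin N)) :
    ‖toEuclideanLin (Tmat A γ γt z) x‖ ≤ z.im⁻¹ * ‖x‖ :=
  (l2_opNorm_mulVec _ x).trans (by gcongr; exact l2_opNorm_Tmat_le hγ hγt hz)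

end Resolvent

/-- Proposition 5.1 part 3: `Υ(z)Υ(z)* ≤ I_N / (Im z)²` and `Υ̃(z)Υ̃(z)* ≤ I_n / (Im z)²`
for `z ∈ ℂ⁺`; in particular the operator (spectral) norms of `Υ(z)` and `Υ̃(z)` are at
most `1 / Im z`. -/
theorem stmt_7 (N n : ℕ) (A : Matrix (Fin N) (Fin n) ℝ)
    (γ : Fin N → ℂ → ℂ) (γt : Fin n → ℂ → ℂ)
    (hγ : ∀ i, IsStieltjesPM (γ i)) (hγt : ∀ j, IsStieltjesPM (γt j)) :
    ∀ z : ℂ, 0 < z.im →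
      (((z.im : ℂ) ^ 2)⁻¹ • (1 : Matrix (Fin N) (Fin N) ℂ)
        - Tmat A γ γt z * (Tmat A γ γt z)ᴴ).PosSemidef
      ∧ (((z.im : ℂ) ^ 2)⁻¹ • (1 : Matrix (Fin n) (Fin n) ℂ)
        - Ttmat A γ γt z * (Ttmat A γ γt z)ᴴ).PosSemidef
      ∧ (∀ x : EuclideanSpace ℂ (Fin N),
          ‖Matrix.toEuclideanLin (Tmat A γ γt z) x‖ ≤ (z.im)⁻¹ * ‖x‖)
      ∧ (∀ x : EuclideanSpace ℂ (Fin n),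
          ‖Matrix.toEuclideanLin (Ttmat A γ γt z) x‖ ≤ (z.im)⁻¹ * ‖x‖) := by
  intro z hz
  rw [Ttmat_eq_Tmat_transpose]
  exact ⟨posSemidef_inv_sq_im_smul_one_sub_Tmat_mul_conjTranspose hγ hγt hz,
    posSemidef_inv_sq_im_smul_one_sub_Tmat_mul_conjTranspose hγt hγ hz,
    norm_toEuclideanLin_Tmat_le hγ hγt hz, norm_toEuclideanLin_Tmat_le hγt hγ hz⟩
end
end

section
/- Let λ_1,…,λ_N be real numbers, n ≥ 1, c_n = N/n, take the variance profile σ_ij = λ_i (so σ_ij depends only on i) and the centering matrix A = 0, and let (ψ_i, ψ̃_j) ∈ S(ℝ+)^{N+n} satisfy ψ_i(z) = −1/(z(1 + (λ_i²/n) Σ_{j=1}^{n} ψ̃_j(z))) for 1 ≤ i ≤ N and ψ̃_j(z) = −1/(z(1 + (1/n) Σ_{i=1}^{N} λ_i² ψ_i(z))) for 1 ≤ j ≤ n. Then the function f_n(z) = (1/N) Σ_{i=1}^{N} ψ_i(z) satisfies f_n(z) = (1/N) Σ_{i=1}^{N} 1/(λ_i²(1 − c_n − c_n z f_n(z)) −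 z) for all z ∈ ℂ ∖ ℝ+; moreover (1/n) Σ_{j=1}^{n} ψ̃_j(z) = c_n (1/N) Σ_{i=1}^{N} ψ_i(z) − (1 − c_n)/z. -/
/-!
A Stieltjes transform of a probability measure on `ℝ₊` does not vanish off `ℝ₊`, so every
equation `ψ = -(z (1 + …))⁻¹` of the system can be cleared of its inverse. Writing
`P = ∑ᵢ ψᵢ`, `T = ∑ⱼ ψ̃ⱼ` and `S = ∑ᵢ λᵢ² ψᵢ`, summing the cleared equations gives
`z P + (z T / n) S = -N` and `z T (1 + S / n) = -n`, whose difference is `z T = N - n + z P`.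
Substituting this into the equations for `ψᵢ` and for `T` yields both identities.
-/

open MeasureTheory Matrix Complex Filter
open scoped Topology ComplexOrder

noncomputable section

theorem MeasureTheory.integral_pos_of_ae_pos {α : Type*} [MeasurableSpace α] {μ : Measure α}
    [NeZero μ] {f : α → ℝ} (hfi : Integrable f μ) (hf : ∀ᵐ a ∂μ, 0 < f a) :
    0 < ∫ a, f a ∂μ := by
  rw [integral_pos_iff_support_of_nonneg_ae (hf.mono fun _ h => h.le) hfi]
  refine pos_iff_ne_zero.mpr fun h => ?_
  obtain ⟨a, hpos, hzero⟩ := (hf.and (measure_eq_zero_iff_ae_notMem.mp h)).exists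
  exact hzero hpos.ne'

theorem MeasureTheory.integral_ne_zero_of_ae_pos_clm {α E : Type*} [MeasurableSpace α]
    [NormedAddCommGroup E] [NormedSpace ℝ E] [CompleteSpace E] {μ : Measure α} [NeZero μ]
    {f : α → E} (hfi : Integrable f μ) (L : E →L[ℝ] ℝ) (hL : ∀ᵐ a ∂μ, 0 < L (f a)) :
    ∫ a, f a ∂μ ≠ 0 := by
  intro h
  have hpos := integral_pos_of_ae_pos (L.integrable_comp hfi) hL
  rw [L.integral_comp_comm hfi, h, map_zero] at hpos
  exact hpos.false

lemma exists_pos_le_norm_ofReal_sub {z : ℂ} (hz : z ∈ offRplus) :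
    ∃ δ > 0, ∀ t : ℝ, 0 ≤ t → δ ≤ ‖(t : ℂ) - z‖ := by
  refine ⟨max |z.im| (-z.re), ?_, fun t ht => max_le ?_ ?_⟩
  · rcases not_and_or.mp hz with h | h
    · exact lt_max_of_lt_left (abs_pos.mpr h)
    · exact lt_max_of_lt_right (by linarith [not_le.mp h])
  · simpa using abs_im_le_norm ((t : ℂ) - z)
  · have := re_le_norm ((t : ℂ) - z)
    simp only [sub_re, ofReal_re] at this
    linarith

-- `(t - z)⁻¹ = (t - conj z) / ‖t - z‖²`: its real part is positive if `z < 0`, and its imaginary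
-- part has the sign of `Im z`.
lemma exists_clm_pos_inv_ofReal_sub {z : ℂ} (hz : z ∈ offRplus) :
    ∃ L : ℂ →L[ℝ] ℝ, ∀ t : ℝ, 0 ≤ t → 0 < L ((t : ℂ) - z)⁻¹ := by
  by_cases him : z.im = 0
  · have hre : z.re < 0 := not_le.mp fun h => hz ⟨him, h⟩
    refine ⟨reCLM, fun t ht => ?_⟩
    have hne : (t : ℂ) - z ≠ 0 := fun h => by
      have := congrArg re h
      simp at this
      linarith
    rw [reCLM_apply, inv_re]
    exact div_pos (by simp; linarith) (normSq_pos.mpr hne)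
  · refine ⟨z.im • imCLM, fun t _ => ?_⟩
    have hne : (t : ℂ) - z ≠ 0 := fun h => him (by simpa using congrArg im h)
    simp only [_root_.smul_apply, imCLM_apply, inv_im, smul_eq_mul, sub_im, ofReal_im,
      zero_sub, neg_neg, ← mul_div_assoc]
    exact div_pos (mul_self_pos.mpr him) (normSq_pos.mpr hne)

theorem IsStieltjesPM.apply_ne_zero {f : ℂ → ℂ} (hf : IsStieltjesPM f) {z : ℂ}
    (hz : z ∈ offRplus) : f z ≠ 0 := by
  obtain ⟨μ, hμ, hμ0, hrep⟩ := hf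
  have hae : ∀ᵐ t ∂μ, 0 ≤ t :=
    (measure_eq_zero_iff_ae_notMem.mp hμ0).mono fun _ ht => not_lt.mp ht
  obtain ⟨δ, hδ, hdist⟩ := exists_pos_le_norm_ofReal_sub hz
  have hint : Integrable (fun t : ℝ => ((t : ℂ) - z)⁻¹) μ := by
    refine Integrable.mono' (integrable_const δ⁻¹)
      (measurable_ofReal.sub measurable_const).inv.aestronglyMeasurable ?_
    filter_upwards [hae] with t ht
    rw [norm_inv]
    exact inv_anti₀ hδ (hdist t ht)
  obtain ⟨L, hL⟩ := exists_clm_pos_inv_ofReal_sub hz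
  rw [hrep z hz]
  exact integral_ne_zero_of_ae_pos_clm hint L (hae.mono hL)

lemma mul_eq_neg_one_of_eq_neg_inv {K : Type*} [DivisionRing K] {a b : K} (ha : a ≠ 0)
    (h : a = -b⁻¹) : a * b = -1 := by
  have hb : b ≠ 0 := fun hb => ha (by simp [h, hb])
  rw [h, neg_mul, inv_mul_cancel₀ hb]

lemma natCast_mul_inv_mul_sum {K : Type*} [DivisionRing K] [CharZero K] (N : ℕ) (f : Fin N → K) :
    (N : K) * ((N : K)⁻¹ * ∑ i, f i) = ∑ i, f i := by
  rcases N with _ | N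
  · simp
  · rw [← mul_assoc, mul_inv_cancel₀ (Nat.cast_ne_zero.mpr N.succ_ne_zero), one_mul]

lemma mul_sum_eq_of_mul_eq_neg_one {K : Type*} [Field K] {N n : ℕ} {z : K} {a w : Fin N → K}
    {b : Fin n → K} (ha : ∀ i, a i * (z * (1 + w i / n * ∑ j, b j)) = -1)
    (hb : ∀ j, b j * (z * (1 + (n : K)⁻¹ * ∑ i, w i * a i)) = -1) :
    z * ∑ j, b j = N - n + z * ∑ i, a i := by
  have hsum_a : ∑ i, a i * (z * (1 + w i / n * ∑ j, b j)) = -N := by simp [ha]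
  have hsum_b : ∑ j, b j * (z * (1 + (n : K)⁻¹ * ∑ i, w i * a i)) = -n := by simp [hb]
  rw [← Finset.sum_mul] at hsum_b
  generalize ∑ j, b j = T at hsum_a hsum_b ⊢
  have hexpand : ∑ i, a i * (z * (1 + w i / n * T)) =
      z * ∑ i, a i + z * T / n * ∑ i, w i * a i := by
    simp only [Finset.mul_sum, ← Finset.sum_add_distrib]
    exact Finset.sum_congr rfl fun i _ => by ring
  linear_combination hsum_b - hsum_a + hexpand

theorem stmt_19_general (N n : ℕ) (hn : 0 < n) (lam : Fin N → ℝ)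
    (ψ : Fin N → ℂ → ℂ) (ψt : Fin n → ℂ → ℂ)
    (hψ : ∀ i, IsStieltjesPM (ψ i)) (hψt : ∀ j, IsStieltjesPM (ψt j))
    (heq : ∀ z ∈ offRplus, ∀ i : Fin N,
      ψ i z = -(z * (1 + ((lam i : ℂ)^2 / (n : ℂ)) * ∑ j : Fin n, ψt j z))⁻¹)
    (heqt : ∀ z ∈ offRplus, ∀ j : Fin n,
      ψt j z = -(z * (1 + (n : ℂ)⁻¹ * ∑ i : Fin N, (lam i : ℂ)^2 * ψ i z))⁻¹) :
    ∀ z ∈ offRplus,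
      ((N : ℂ)⁻¹ * ∑ i : Fin N, ψ i z)
        = (N : ℂ)⁻¹ * ∑ i : Fin N,
            ((lam i : ℂ)^2 * (1 - (N : ℂ)/(n : ℂ)
              - (N : ℂ)/(n : ℂ) * z * ((N : ℂ)⁻¹ * ∑ k : Fin N, ψ k z)) - z)⁻¹
      ∧ (n : ℂ)⁻¹ * ∑ j : Fin n, ψt j z
          = (N : ℂ)/(n : ℂ) * ((N : ℂ)⁻¹ * ∑ i : Fin N, ψ i z)
            - (1 - (N : ℂ)/(n : ℂ)) / z := by
  intro z hz
  have hz0 : z ≠ 0 := fun h => hz ⟨by simp [h], by simp [h]⟩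
  have hn0 : (n : ℂ) ≠ 0 := Nat.cast_ne_zero.mpr hn.ne'
  have hzT := mul_sum_eq_of_mul_eq_neg_one (w := fun i => (lam i : ℂ) ^ 2)
    (fun i => mul_eq_neg_one_of_eq_neg_inv ((hψ i).apply_ne_zero hz) (heq z hz i))
    (fun j => mul_eq_neg_one_of_eq_neg_inv ((hψt j).apply_ne_zero hz) (heqt z hz j))
  rw [← natCast_mul_inv_mul_sum N fun i => ψ i z, ← mul_assoc] at hzT
  refine ⟨congrArg (HMul.hMul _) (Finset.sum_congr rfl fun i _ => ?_), ?_⟩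
  · rw [heq z hz i, ← inv_neg]
    congr 1
    linear_combination -((lam i : ℂ) ^ 2 / n) * hzT + (lam i : ℂ) ^ 2 * mul_inv_cancel₀ hn0
  · field_simp
    linear_combination hzT

/-- Section 3.3: for the variance profile `σ_ij = λ_i` and centering matrix `A = 0`,
any solution `(ψ_i, ψ̃_j)` in `S(ℝ₊)^{N+n}` of the system of `N + n` equations
satisfies, with `c_n = N/n` and `f_n(z) = N⁻¹ ∑ᵢ ψ_i(z)`, the discretized
Marčenko–Pastur type equation
`f_n(z) = N⁻¹ ∑ᵢ 1 / (λ_i² (1 - c_n - c_n z f_n(z)) - z)` on `ℂ ∖ ℝ₊`; moreover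
`n⁻¹ ∑ⱼ ψ̃_j(z) = c_n f_n(z) - (1 - c_n)/z`. -/
theorem stmt_19 (N n : ℕ) (hN : 0 < N) (hn : 0 < n) (lam : Fin N → ℝ)
    (ψ : Fin N → ℂ → ℂ) (ψt : Fin n → ℂ → ℂ)
    (hψ : ∀ i, IsStieltjesPM (ψ i)) (hψt : ∀ j, IsStieltjesPM (ψt j))
    (heq : ∀ z ∈ offRplus, ∀ i : Fin N,
      ψ i z = -(z * (1 + ((lam i : ℂ)^2 / (n : ℂ)) * ∑ j : Fin n, ψt j z))⁻¹)
    (heqt : ∀ z ∈ offRplus, ∀ j : Fin n,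
      ψt j z = -(z * (1 + (n : ℂ)⁻¹ * ∑ i : Fin N, (lam i : ℂ)^2 * ψ i z))⁻¹) :
    ∀ z ∈ offRplus,
      ((N : ℂ)⁻¹ * ∑ i : Fin N, ψ i z)
        = (N : ℂ)⁻¹ * ∑ i : Fin N,
            ((lam i : ℂ)^2 * (1 - (N : ℂ)/(n : ℂ)
              - (N : ℂ)/(n : ℂ) * z * ((N : ℂ)⁻¹ * ∑ k : Fin N, ψ k z)) - z)⁻¹
      ∧ (n : ℂ)⁻¹ * ∑ j : Fin n, ψt j z
          = (N : ℂ)/(n : ℂ) * ((N : ℂ)⁻¹ * ∑ i : Fin N, ψ i z)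
            - (1 - (N : ℂ)/(n : ℂ)) / z :=
  stmt_19_general N n hn lam ψ ψt hψ hψt heq heqt
end
end
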